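/- arXiv:0706.3221 — 2 statements merged into one kernel-verified Lean document; each statement's English description precedes it below -/
import Mathlib

section
/- Let K₁, K₂, c ∈ ℝ with K₁ ≠ 0, K₂ ≠ 0 and K₁ ≠ K₂, and let ω be a circle in ℝ² (the set of points at a fixed distance ρ > 0 from a fixed center (x₀, y₀)). If A, B, C, D are four pairwise distinct points of ℝ², each lying both on the conic {(x, y) : K₁x² + K₂y² = c} and on ω, then (C₁ − A₁)(D₂ − B₂) + (C₂ − A₂)(D₁ − B₁) = 0; that is, the directions of the lines (AC) and (BD) are mirror images of each other in the coordinate axes, so the two angle bisectors of the pair of lines (AC), (BD) are parallel to the coordinate axes (the axes of the conic). Since the labelling of the four points is arbitrary, the same holds for any splitting of the four intersection points into two pairs. -/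
private lemma quartic_coeff (a b c d e t1 t2 t3 t4 : ℝ)
    (h12 : t1 ≠ t2) (h13 : t1 ≠ t3) (h14 : t1 ≠ t4)
    (h23 : t2 ≠ t3) (h24 : t2 ≠ t4) (h34 : t3 ≠ t4)
    (h1 : a*t1^4 + b*t1^3 + c*t1^2 + d*t1 + e = 0)
    (h2 : a*t2^4 + b*t2^3 + c*t2^2 + d*t2 + e = 0)
    (h3 : a*t3^4 + b*t3^3 + c*t3^2 + d*t3 + e = 0)
    (h4 : a*t4^4 + b*t4^3 + c*t4^2 + d*t4 + e = 0) :
    a * (t1 + t2 + t3 + t4) + b = 0 := by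
  have hV : (t1-t2)*(t1-t3)*(t1-t4)*(t2-t3)*(t2-t4)*(t3-t4) ≠ 0 :=
    mul_ne_zero (mul_ne_zero (mul_ne_zero (mul_ne_zero (mul_ne_zero
      (sub_ne_zero.2 h12) (sub_ne_zero.2 h13)) (sub_ne_zero.2 h14))
      (sub_ne_zero.2 h23)) (sub_ne_zero.2 h24)) (sub_ne_zero.2 h34)
  have key : (a*(t1+t2+t3+t4)+b) * ((t1-t2)*(t1-t3)*(t1-t4)*(t2-t3)*(t2-t4)*(t3-t4)) = 0 := by
    linear_combination ((t2-t3)*(t2-t4)*(t3-t4))*h1 - ((t1-t3)*(t1-t4)*(t3-t4))*h2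
      + ((t1-t2)*(t1-t4)*(t2-t4))*h3 - ((t1-t2)*(t1-t3)*(t2-t3))*h4
  exact (mul_eq_zero.1 key).resolve_right hV

private lemma aux_chords (k s t e p q g : ℝ) (hk : k ≠ 0) (hs : s ≠ 0)
    (A B C D : ℝ × ℝ)
    (hAB : A ≠ B) (hAC : A ≠ C) (hAD : A ≠ D)
    (hBC : B ≠ C) (hBD : B ≠ D) (hCD : C ≠ D)
    (h1A : k * A.2^2 = s * A.1 + t * A.2 + e)
    (h1B : k * B.2^2 = s * B.1 + t * B.2 + e)
    (h1C : k * C.2^2 = s * C.1 + t * C.2 + e)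
    (h1D : k * D.2^2 = s * D.1 + t * D.2 + e)
    (h2A : k * A.1^2 = p * A.1 + q * A.2 + g)
    (h2B : k * B.1^2 = p * B.1 + q * B.2 + g)
    (h2C : k * C.1^2 = p * C.1 + q * C.2 + g)
    (h2D : k * D.1^2 = p * D.1 + q * D.2 + g) :
    (C.1 - A.1) * (D.2 - B.2) + (C.2 - A.2) * (D.1 - B.1) = 0 := by
  have hy : ∀ P Q : ℝ × ℝ, P ≠ Q → (k * P.2^2 = s * P.1 + t * P.2 + e) →
      (k * Q.2^2 = s * Q.1 + t * Q.2 + e) → P.2 ≠ Q.2 := by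
    intro P Q hPQ hP hQ hEq
    apply hPQ
    have h0 : s * (P.1 - Q.1) = 0 := by
      linear_combination hQ - hP + (k*(P.2+Q.2) - t) * hEq
    have h1 : P.1 = Q.1 := by
      have := (mul_eq_zero.1 h0).resolve_left hs
      linarith
    exact Prod.ext_iff.2 ⟨h1, hEq⟩
  have quart : ∀ P : ℝ × ℝ, (k * P.2^2 = s * P.1 + t * P.2 + e) →
      (k * P.1^2 = p * P.1 + q * P.2 + g) →
      k^3*P.2^4 + (-(2*k^2*t))*P.2^3 + (k*t^2 - 2*k^2*e - p*s*k)*P.2^2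
        + (2*k*t*e + p*s*t - s^2*q)*P.2 + (k*e^2 + p*s*e - s^2*g) = 0 := by
    intro P h1 h2
    linear_combination s^2 * h2 + (k*(k*P.2^2 - t*P.2 - e + s*P.1) - p*s) * h1
  have hsum : k * (A.2 + B.2 + C.2 + D.2) = 2*t := by
    have h := quartic_coeff (k^3) (-(2*k^2*t)) (k*t^2 - 2*k^2*e - p*s*k)
      (2*k*t*e + p*s*t - s^2*q) (k*e^2 + p*s*e - s^2*g) A.2 B.2 C.2 D.2
      (hy A B hAB h1A h1B) (hy A C hAC h1A h1C) (hy A D hAD h1A h1D)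
      (hy B C hBC h1B h1C) (hy B D hBD h1B h1D) (hy C D hCD h1C h1D)
      (quart A h1A h2A) (quart B h1B h2B) (quart C h1C h2C) (quart D h1D h2D)
    have h2' : k^2 * (k*(A.2+B.2+C.2+D.2) - 2*t) = 0 := by linear_combination h
    have := (mul_eq_zero.1 h2').resolve_left (pow_ne_zero 2 hk)
    linarith
  have hdu : s*(C.1-A.1) = (C.2-A.2)*(k*(C.2+A.2)-t) := by linear_combination h1A - h1C
  have hbd : s*(D.1-B.1) = (D.2-B.2)*(k*(D.2+B.2)-t) := by linear_combination h1B - h1D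
  have key : s * ((C.1 - A.1) * (D.2 - B.2) + (C.2 - A.2) * (D.1 - B.1)) = 0 := by
    linear_combination (D.2-B.2)*hdu + (C.2-A.2)*hbd + (C.2-A.2)*(D.2-B.2)*hsum
  exact (mul_eq_zero.1 key).resolve_left hs

set_option maxHeartbeats 1000000 in
/-- If four pairwise distinct points `A, B, C, D` of the plane lie both on the conic
`K₁ x² + K₂ y² = c` (with `K₁ ≠ 0`, `K₂ ≠ 0`, `K₁ ≠ K₂`) and on a circle of radius `ρ > 0`
centered at `(x₀, y₀)`, then the directions of the lines `(AC)` and `(BD)` are mirror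
images of each other in the coordinate axes, i.e.
`(C₁ − A₁)(D₂ − B₂) + (C₂ − A₂)(D₁ − B₁) = 0`; hence the two angle bisectors of the pair
of lines `(AC)`, `(BD)` are parallel to the coordinate axes (the axes of the conic). -/
theorem bisectors_parallel_to_axes_of_conic_circle_intersection
    (K₁ K₂ c x₀ y₀ ρ : ℝ) (hK₁ : K₁ ≠ 0) (hK₂ : K₂ ≠ 0) (hK : K₁ ≠ K₂) (hρ : 0 < ρ)
    (A B C D : ℝ × ℝ)
    (hAB : A ≠ B) (hAC : A ≠ C) (hAD : A ≠ D)
    (hBC : B ≠ C) (hBD : B ≠ D) (hCD : C ≠ D)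
    (hQA : K₁ * A.1 ^ 2 + K₂ * A.2 ^ 2 = c)
    (hQB : K₁ * B.1 ^ 2 + K₂ * B.2 ^ 2 = c)
    (hQC : K₁ * C.1 ^ 2 + K₂ * C.2 ^ 2 = c)
    (hQD : K₁ * D.1 ^ 2 + K₂ * D.2 ^ 2 = c)
    (hωA : (A.1 - x₀) ^ 2 + (A.2 - y₀) ^ 2 = ρ ^ 2)
    (hωB : (B.1 - x₀) ^ 2 + (B.2 - y₀) ^ 2 = ρ ^ 2)
    (hωC : (C.1 - x₀) ^ 2 + (C.2 - y₀) ^ 2 = ρ ^ 2)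
    (hωD : (D.1 - x₀) ^ 2 + (D.2 - y₀) ^ 2 = ρ ^ 2) :
    (C.1 - A.1) * (D.2 - B.2) + (C.2 - A.2) * (D.1 - B.1) = 0 := by
  have hk : K₁ - K₂ ≠ 0 := sub_ne_zero.2 hK
  set k := K₁ - K₂ with hkdef
  have h1 : ∀ P : ℝ × ℝ, (K₁ * P.1 ^ 2 + K₂ * P.2 ^ 2 = c) →
      ((P.1 - x₀) ^ 2 + (P.2 - y₀) ^ 2 = ρ ^ 2) →
      k * P.2^2 = (2*K₁*x₀) * P.1 + (2*K₁*y₀) * P.2 +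
        (k*A.2^2 - 2*K₁*x₀*A.1 - 2*K₁*y₀*A.2) := by
    intro P hQP hωP
    linear_combination K₁*hωP - K₁*hωA - hQP + hQA
  have h2 : ∀ P : ℝ × ℝ, (K₁ * P.1 ^ 2 + K₂ * P.2 ^ 2 = c) →
      ((P.1 - x₀) ^ 2 + (P.2 - y₀) ^ 2 = ρ ^ 2) →
      k * P.1^2 = (-(2*K₂*x₀)) * P.1 + (-(2*K₂*y₀)) * P.2 +
        (k*A.1^2 + 2*K₂*x₀*A.1 + 2*K₂*y₀*A.2) := by
    intro P hQP hωP
    linear_combination hQP - hQA - K₂*hωP + K₂*hωA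
  by_cases hx0 : x₀ = 0
  · by_cases hy0 : y₀ = 0
    · -- degenerate case: all coordinates have equal squares
      subst hx0; subst hy0
      have pm : ∀ x y : ℝ, k * x^2 = k * y^2 → x = y ∨ x = -y := by
        intro x y h
        have h2' : (x - y) * (x + y) = 0 := by
          have hxy : x^2 = y^2 := mul_left_cancel₀ hk h
          linear_combination hxy
        rcases mul_eq_zero.1 h2' with h' | h'
        · exact Or.inl (sub_eq_zero.1 h')
        · exact Or.inr (eq_neg_of_add_eq_zero_left h')
      have sB2 := pm B.2 A.2 (by linear_combination (h1 B hQB hωB))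
      have sC2 := pm C.2 A.2 (by linear_combination (h1 C hQC hωC))
      have sD2 := pm D.2 A.2 (by linear_combination (h1 D hQD hωD))
      have sB1 := pm B.1 A.1 (by linear_combination (h2 B hQB hωB))
      have sC1 := pm C.1 A.1 (by linear_combination (h2 C hQC hωC))
      have sD1 := pm D.1 A.1 (by linear_combination (h2 D hQD hωD))
      clear h1 h2 hQA hQB hQC hQD hωA hωB hωC hωD
      obtain ⟨a1, a2⟩ := A
      obtain ⟨b1, b2⟩ := B
      obtain ⟨c1, c2⟩ := C
      obtain ⟨d1, d2⟩ := D
      dsimp only at hAB hAC hAD hBC hBD hCD sB1 sB2 sC1 sC2 sD1 sD2 ⊢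
      simp only [Prod.mk.injEq, ne_eq] at hAB hAC hAD hBC hBD hCD
      rcases sB1 with rfl | rfl <;> rcases sB2 with rfl | rfl <;>
        rcases sC1 with rfl | rfl <;> rcases sC2 with rfl | rfl <;>
        rcases sD1 with rfl | rfl <;> rcases sD2 with rfl | rfl <;>
        first
          | ring1
          | exact (hAB ⟨rfl, rfl⟩).elim
          | exact (hAC ⟨rfl, rfl⟩).elim
          | exact (hAD ⟨rfl, rfl⟩).elim
          | exact (hBC ⟨rfl, rfl⟩).elim
          | exact (hBD ⟨rfl, rfl⟩).elim
          | exact (hCD ⟨rfl, rfl⟩).elim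
    · -- x₀ = 0, y₀ ≠ 0 : use aux_chords with coordinates swapped
      have hs : (-(2*K₂*y₀) : ℝ) ≠ 0 := by
        simp only [neg_ne_zero]
        exact mul_ne_zero (mul_ne_zero two_ne_zero hK₂) hy0
      have hsw : ∀ P Q : ℝ × ℝ, P ≠ Q → ((P.2, P.1) : ℝ × ℝ) ≠ (Q.2, Q.1) := by
        intro P Q h hEq
        exact h (Prod.ext_iff.2 ⟨(Prod.ext_iff.1 hEq).2, (Prod.ext_iff.1 hEq).1⟩)
      have key := aux_chords k (-(2*K₂*y₀)) (-(2*K₂*x₀))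
        (k*A.1^2 + 2*K₂*x₀*A.1 + 2*K₂*y₀*A.2)
        (2*K₁*y₀) (2*K₁*x₀) (k*A.2^2 - 2*K₁*x₀*A.1 - 2*K₁*y₀*A.2) hk hs
        (A.2, A.1) (B.2, B.1) (C.2, C.1) (D.2, D.1)
        (hsw A B hAB) (hsw A C hAC) (hsw A D hAD)
        (hsw B C hBC) (hsw B D hBD) (hsw C D hCD)
        (by linear_combination h2 A hQA hωA) (by linear_combination h2 B hQB hωB)
        (by linear_combination h2 C hQC hωC) (by linear_combination h2 D hQD hωD)
        (by linear_combination h1 A hQA hωA) (by linear_combination h1 B hQB hωB)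
        (by linear_combination h1 C hQC hωC) (by linear_combination h1 D hQD hωD)
      linarith [key]
  · -- x₀ ≠ 0 : use aux_chords directly
    have hs : (2*K₁*x₀ : ℝ) ≠ 0 := mul_ne_zero (mul_ne_zero two_ne_zero hK₁) hx0
    exact aux_chords k (2*K₁*x₀) (2*K₁*y₀)
      (k*A.2^2 - 2*K₁*x₀*A.1 - 2*K₁*y₀*A.2)
      (-(2*K₂*x₀)) (-(2*K₂*y₀)) (k*A.1^2 + 2*K₂*x₀*A.1 + 2*K₂*y₀*A.2) hk hs
      A B C D hAB hAC hAD hBC hBD hCD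
      (h1 A hQA hωA) (h1 B hQB hωB) (h1 C hQC hωC) (h1 D hQD hωD)
      (h2 A hQA hωA) (h2 B hQB hωB) (h2 C hQC hωC) (h2 D hQD hωD)
end

section
/- Let γ : ℝ → ℝ² be a C^∞ curve and t₀ ∈ ℝ a parameter at which γ'(t₀) and γ''(t₀) are linearly independent (regular point with nonvanishing curvature). Then there exist constants C₀ > 0 and ε₀ > 0 such that for all 0 < ε < ε₀ and all parameters t₁, t₂ with t₀ < t₁ < t₂, t₁ − t₀ ≥ ε/2, t₂ − t₁ ≥ ε/2 and t₂ − t₀ ≤ 2ε, the three points γ(t₀), γ(t₁), γ(t₂) are affinely independent, and, denoting by O the circumcenter of the triangle γ(t₀)γ(t₁)γ(t₂), the tangent direction of the circumscribed circle at γ(t₀) is ε²-close in angle to the tangent of the curve: |⟨γ'(t₀)/‖γ'(t₀)‖, (γ(t₀) − O)/‖γ(t₀) − O‖⟩| ≤ C₀ ε². -/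
noncomputable section

/-- Euclidean plane. -/
abbrev E2 : Type := EuclideanSpace ℝ (Fin 2)

open Set

/-- Mean value inequality helper. -/
lemma lip_of_deriv {E : Type*} [NormedAddCommGroup E] [NormedSpace ℝ E] {f f' : ℝ → E}
    (hf : ∀ x, HasDerivAt f (f' x) x) {M lo hi : ℝ} (hbd : ∀ x ∈ Set.Icc lo hi, ‖f' x‖ ≤ M)
    {a b : ℝ} (ha : a ∈ Set.Icc lo hi) (hb : b ∈ Set.Icc lo hi) :
    ‖f b - f a‖ ≤ M * |b - a| := by
  have := (convex_Icc lo hi).norm_image_sub_le_of_norm_hasDerivWithin_le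
    (fun x _ => (hf x).hasDerivWithinAt) hbd ha hb
  simpa [Real.norm_eq_abs] using this

/-- Nondegeneracy constant from linear independence in the plane. -/
lemma exists_nondeg (v₁ v₂ : E2) (h : LinearIndependent ℝ ![v₁, v₂]) :
    ∃ c > (0 : ℝ), ∀ v : E2, c * ‖v‖ ≤ |(inner ℝ v₁ v : ℝ)| + |(inner ℝ v₂ v : ℝ)| := by
  set L : E2 →ₗ[ℝ] ℝ × ℝ := LinearMap.prod (innerₛₗ ℝ v₁) (innerₛₗ ℝ v₂) with hL
  have hspan : Submodule.span ℝ {v₁, v₂} = ⊤ := by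
    have hcard : Fintype.card (Fin 2) = Module.finrank ℝ E2 := by
      simp [finrank_euclideanSpace_fin]
    have := h.span_eq_top_of_card_eq_finrank hcard
    rwa [show Set.range ![v₁, v₂] = {v₁, v₂} by
      simp [Matrix.range_cons, Matrix.range_empty, Set.pair_comm]] at this
  have hinj : Function.Injective L := by
    rw [← LinearMap.ker_eq_bot]
    rw [Submodule.eq_bot_iff]
    intro v hv
    simp only [LinearMap.mem_ker, hL, LinearMap.prod_apply, Function.prod, Prod.mk_eq_zero] at hv
    obtain ⟨h1, h2⟩ := hv
    have hv' : v ∈ Submodule.span ℝ ({v₁, v₂} : Set E2) := by rw [hspan]; trivial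
    obtain ⟨a, b, hab⟩ := Submodule.mem_span_pair.mp hv'
    simp only [innerₛₗ_apply_apply] at h1 h2
    have : (inner ℝ v v : ℝ) = 0 := by
      calc (inner ℝ v v : ℝ) = inner ℝ (a • v₁ + b • v₂) v := by rw [hab]
        _ = a * inner ℝ v₁ v + b * inner ℝ v₂ v := by
            rw [inner_add_left, real_inner_smul_left, real_inner_smul_left]
        _ = 0 := by rw [h1, h2]; ring
    exact inner_self_eq_zero.mp this
  have hfr : Module.finrank ℝ E2 = Module.finrank ℝ (ℝ × ℝ) := by
    simp [finrank_euclideanSpace_fin]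
  let e : E2 ≃ₗ[ℝ] ℝ × ℝ := LinearMap.linearEquivOfInjective L hinj hfr
  let T : (ℝ × ℝ) →L[ℝ] E2 := LinearMap.toContinuousLinearMap (e.symm : (ℝ × ℝ) →ₗ[ℝ] E2)
  refine ⟨(‖T‖ + 1)⁻¹, by positivity, fun v => ?_⟩
  have heval : e v = L v := rfl
  have hTnorm : ‖v‖ ≤ (‖T‖ + 1) * (|(inner ℝ v₁ v : ℝ)| + |(inner ℝ v₂ v : ℝ)|) := by
    have h1 : ‖v‖ = ‖T (e v)‖ := by
      simp [T, LinearMap.coe_toContinuousLinearMap']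
    have h2 : ‖T (e v)‖ ≤ ‖T‖ * ‖e v‖ := T.le_opNorm _
    have h3 : ‖e v‖ ≤ |(inner ℝ v₁ v : ℝ)| + |(inner ℝ v₂ v : ℝ)| := by
      rw [heval]
      rw [show L v = ((inner ℝ v₁ v : ℝ), (inner ℝ v₂ v : ℝ)) from rfl]
      rw [Prod.norm_def]
      simp only [Real.norm_eq_abs]
      exact max_le (le_add_of_nonneg_right (abs_nonneg _))
        (le_add_of_nonneg_left (abs_nonneg _))
    have h4 : (0:ℝ) ≤ ‖T‖ := norm_nonneg _
    nlinarith [abs_nonneg ((inner ℝ v₁ v : ℝ)), abs_nonneg ((inner ℝ v₂ v : ℝ))]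
  rw [inv_mul_le_iff₀ (by positivity)]
  linarith [hTnorm]

set_option maxHeartbeats 1600000 in
/-- For a smooth plane curve `γ` with `γ'(t₀)`, `γ''(t₀)` linearly independent, and points
`γ(t₀), γ(t₁), γ(t₂)` with mutual parameter distances of order `ε`, the three points are
affinely independent and the tangent direction of the circumscribed circle at `γ(t₀)` is
`ε²`-close in angle to the tangent of the curve: the (unit) tangent of the curve is
`ε²`-nearly orthogonal to the (unit) radius vector `γ(t₀) − O` from the circumcenter `O`. -/
theorem circle_through_three_points_tangent_eps2_close
    (γ : ℝ → E2) (hγ : ContDiff ℝ (⊤ : ℕ∞) γ) (t₀ : ℝ)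
    (hreg : LinearIndependent ℝ ![deriv γ t₀, deriv (deriv γ) t₀]) :
    ∃ C₀ > (0 : ℝ), ∃ ε₀ > (0 : ℝ), ∀ ε : ℝ, 0 < ε → ε < ε₀ →
      ∀ t₁ t₂ : ℝ, t₀ < t₁ → t₁ < t₂ →
        ε / 2 ≤ t₁ - t₀ → ε / 2 ≤ t₂ - t₁ → t₂ - t₀ ≤ 2 * ε →
        ∃ hind : AffineIndependent ℝ ![γ t₀, γ t₁, γ t₂],
          |(inner ℝ (‖deriv γ t₀‖⁻¹ • deriv γ t₀)
              (‖γ t₀ - (⟨![γ t₀, γ t₁, γ t₂], hind⟩ : Affine.Simplex ℝ E2 2).circumcenter‖⁻¹ •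
                (γ t₀ - (⟨![γ t₀, γ t₁, γ t₂], hind⟩ : Affine.Simplex ℝ E2 2).circumcenter)) : ℝ)|
            ≤ C₀ * ε ^ 2 := by
  obtain ⟨c₁, hc₁pos, hnd⟩ := exists_nondeg _ _ hreg
  set D1 := deriv γ with hD1def
  set D2 := deriv (deriv γ) with hD2def
  set D3 := deriv (deriv (deriv γ)) with hD3def
  have hγ0 : ContDiff ℝ ((⊤ : ℕ∞) : WithTop ℕ∞) γ := hγ.of_le (by simp)
  have hdiff : Differentiable ℝ γ := (contDiff_infty_iff_deriv.mp hγ0).1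
  have hγ1 : ContDiff ℝ ((⊤ : ℕ∞) : WithTop ℕ∞) D1 := (contDiff_infty_iff_deriv.mp hγ0).2
  have hγ2 : ContDiff ℝ ((⊤ : ℕ∞) : WithTop ℕ∞) D2 := (contDiff_infty_iff_deriv.mp hγ1).2
  have hγ3 : ContDiff ℝ ((⊤ : ℕ∞) : WithTop ℕ∞) D3 := (contDiff_infty_iff_deriv.mp hγ2).2
  have hd1 : ∀ t, HasDerivAt γ (D1 t) t := fun t => (hdiff t).hasDerivAt
  have hd2 : ∀ t, HasDerivAt D1 (D2 t) t :=
    fun t => ((contDiff_infty_iff_deriv.mp hγ1).1 t).hasDerivAt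
  have hd3 : ∀ t, HasDerivAt D2 (D3 t) t :=
    fun t => ((contDiff_infty_iff_deriv.mp hγ2).1 t).hasDerivAt
  set K : Set ℝ := Set.Icc (t₀ - 1) (t₀ + 1) with hKdef
  obtain ⟨M₁', hM₁'⟩ := isCompact_Icc.exists_bound_of_continuousOn
    (hγ1.continuous.continuousOn (s := K))
  obtain ⟨M₂', hM₂'⟩ := isCompact_Icc.exists_bound_of_continuousOn
    (hγ2.continuous.continuousOn (s := K))
  obtain ⟨M₃', hM₃'⟩ := isCompact_Icc.exists_bound_of_continuousOn
    (hγ3.continuous.continuousOn (s := K))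
  set M₁ := max M₁' 1 with hM₁def
  set M₂ := max M₂' 1 with hM₂def
  set M₃ := max M₃' 1 with hM₃def
  have hM₁ : ∀ x ∈ K, ‖D1 x‖ ≤ M₁ := fun x hx => le_trans (hM₁' x hx) (le_max_left _ _)
  have hM₂ : ∀ x ∈ K, ‖D2 x‖ ≤ M₂ := fun x hx => le_trans (hM₂' x hx) (le_max_left _ _)
  have hM₃ : ∀ x ∈ K, ‖D3 x‖ ≤ M₃ := fun x hx => le_trans (hM₃' x hx) (le_max_left _ _)
  have hM₁pos : (0:ℝ) < M₁ := lt_of_lt_of_le one_pos (le_max_right _ _)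
  have hM₂pos : (0:ℝ) < M₂ := lt_of_lt_of_le one_pos (le_max_right _ _)
  have hM₃pos : (0:ℝ) < M₃ := lt_of_lt_of_le one_pos (le_max_right _ _)
  have hv₁ne : D1 t₀ ≠ 0 := by
    have := hreg.ne_zero 0
    simpa using this
  have hnv : (0:ℝ) < ‖D1 t₀‖ := norm_pos_iff.mpr hv₁ne
  set nv := ‖D1 t₀‖ with hnvdef
  set Rmin := nv ^ 2 / (8 * M₂) with hRmindef
  have hRminpos : (0:ℝ) < Rmin := by positivity
  set X := M₁ * M₃ + 3 * M₂ * M₁ with hXdef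
  have hXpos : (0:ℝ) < X := by positivity
  set C₀ := 4 * (M₃ + X / Rmin) / nv with hC₀def
  have hC₀pos : (0:ℝ) < C₀ := by positivity
  set ε₀ := min (min (1/2) (c₁ / (4 * (M₂ + M₃)))) (min (nv / (4 * M₂)) (nv ^ 2 / (16 * M₂ * M₁)))
    with hε₀def
  have hε₀pos : (0:ℝ) < ε₀ := by positivity
  refine ⟨C₀, hC₀pos, ε₀, hε₀pos, ?_⟩
  intro ε hε hεε₀ t₁ t₂ ht01 ht12 hq1 hq2 hq3
  -- epsilon facts
  have hεa : ε < 1/2 := lt_of_lt_of_le hεε₀ ((min_le_left _ _).trans (min_le_left _ _))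
  have hε1 : 2 * ε ≤ 1 := by linarith
  have hε2 : 2 * ε * (M₂ + M₃) < c₁ := by
    have h := lt_of_lt_of_le hεε₀ ((min_le_left _ _).trans (min_le_right _ _))
    rw [lt_div_iff₀ (by positivity)] at h
    have hp : (0:ℝ) ≤ ε * M₂ + ε * M₃ := by positivity
    linarith only [h, hp]
  have hε3 : 2 * ε * M₂ ≤ nv / 2 := by
    have h := lt_of_lt_of_le hεε₀ ((min_le_right _ _).trans (min_le_left _ _))
    rw [lt_div_iff₀ (by positivity)] at h
    rw [le_div_iff₀ (by norm_num : (0:ℝ) < 2)]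
    linarith only [h]
  have hε4 : 2 * ε * M₁ ≤ nv ^ 2 / (8 * M₂) := by
    have h := lt_of_lt_of_le hεε₀ ((min_le_right _ _).trans (min_le_right _ _))
    rw [lt_div_iff₀ (by positivity)] at h
    rw [le_div_iff₀ (by positivity)]
    linarith only [h]
  -- memberships
  have hsub : Set.Icc t₀ t₂ ⊆ K := Set.Icc_subset_Icc (by linarith) (by linarith)
  have ht₀2 : t₀ ∈ Set.Icc t₀ t₂ := ⟨le_refl _, by linarith⟩
  have ht₂2 : t₂ ∈ Set.Icc t₀ t₂ := ⟨by linarith, le_refl _⟩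
  -- Lipschitz bounds with width ≤ 2ε
  have habs : ∀ x ∈ Set.Icc t₀ t₂, ∀ y ∈ Set.Icc t₀ t₂, |x - y| ≤ 2 * ε := by
    intro x hx y hy
    rw [abs_sub_le_iff]
    exact ⟨by linarith only [hx.1, hx.2, hy.1, hy.2, hq3],
      by linarith only [hx.1, hx.2, hy.1, hy.2, hq3]⟩
  have hlip0 : ∀ x ∈ Set.Icc t₀ t₂, ∀ y ∈ Set.Icc t₀ t₂, ‖γ x - γ y‖ ≤ M₁ * (2 * ε) := by
    intro x hx y hy
    refine le_trans (lip_of_deriv hd1 (fun z hz => hM₁ z (hsub hz)) hy hx) ?_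
    exact mul_le_mul_of_nonneg_left (habs x hx y hy) hM₁pos.le
  have hlip1 : ∀ x ∈ Set.Icc t₀ t₂, ∀ y ∈ Set.Icc t₀ t₂, ‖D1 x - D1 y‖ ≤ M₂ * (2 * ε) := by
    intro x hx y hy
    refine le_trans (lip_of_deriv hd2 (fun z hz => hM₂ z (hsub hz)) hy hx) ?_
    exact mul_le_mul_of_nonneg_left (habs x hx y hy) hM₂pos.le
  have hlip2 : ∀ x ∈ Set.Icc t₀ t₂, ∀ y ∈ Set.Icc t₀ t₂, ‖D2 x - D2 y‖ ≤ M₃ * (2 * ε) := by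
    intro x hx y hy
    refine le_trans (lip_of_deriv hd3 (fun z hz => hM₃ z (hsub hz)) hy hx) ?_
    exact mul_le_mul_of_nonneg_left (habs x hx y hy) hM₃pos.le
  -- affine independence
  have hind : AffineIndependent ℝ ![γ t₀, γ t₁, γ t₂] := by
    rw [affineIndependent_iff_not_collinear]
    intro hcol
    have hmem0 : γ t₀ ∈ Set.range ![γ t₀, γ t₁, γ t₂] := ⟨0, rfl⟩
    obtain ⟨v, hv⟩ := (collinear_iff_of_mem hmem0).mp hcol
    obtain ⟨r₁, hr₁⟩ := hv (γ t₁) ⟨1, rfl⟩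
    obtain ⟨r₂, hr₂⟩ := hv (γ t₂) ⟨2, rfl⟩
    have hspanne : ((ℝ ∙ v)ᗮ : Submodule ℝ E2) ≠ ⊥ := by
      intro hbot
      have htop : (ℝ ∙ v) = (⊤ : Submodule ℝ E2) := Submodule.orthogonal_eq_bot_iff.mp hbot
      by_cases hv0 : v = 0
      · rw [hv0, Submodule.span_zero_singleton] at htop
        have : D1 t₀ ∈ (⊥ : Submodule ℝ E2) := htop ▸ Submodule.mem_top
        exact hv₁ne (by simpa using this)
      · have h1 := finrank_span_singleton (K := ℝ) hv0
        rw [htop, finrank_top, finrank_euclideanSpace_fin] at h1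
        norm_num at h1
    obtain ⟨n, hnmem, hn0⟩ := Submodule.exists_mem_ne_zero_of_ne_bot hspanne
    have hnv0 : (inner ℝ v n : ℝ) = 0 :=
      (Submodule.mem_orthogonal _ _).mp hnmem v (Submodule.mem_span_singleton_self v)
    have hnpos : (0:ℝ) < ‖n‖ := norm_pos_iff.mpr hn0
    have hnv0' : (inner ℝ n v : ℝ) = 0 := by rw [real_inner_comm]; exact hnv0
    set h : ℝ → ℝ := fun t => (inner ℝ n (γ t) : ℝ) with hhdef
    have hhd : ∀ t, HasDerivAt h ((inner ℝ n (D1 t) : ℝ)) t := fun t => by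
      simpa only [inner_zero_left, add_zero] using (hasDerivAt_const t n).inner ℝ (hd1 t)
    have hhd2 : ∀ t, HasDerivAt (fun t => (inner ℝ n (D1 t) : ℝ)) ((inner ℝ n (D2 t) : ℝ)) t :=
      fun t => by simpa only [inner_zero_left, add_zero] using
        (hasDerivAt_const t n).inner ℝ (hd2 t)
    have heq1 : h t₀ = h t₁ := by
      simp only [hhdef, hr₁, vadd_eq_add, inner_add_right, real_inner_smul_right,
        hnv0', mul_zero, zero_add]
    have heq2 : h t₁ = h t₂ := by
      simp only [hhdef, hr₁, hr₂, vadd_eq_add, inner_add_right, real_inner_smul_right,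
        hnv0', mul_zero, zero_add]
    obtain ⟨a, haI, ha0⟩ := exists_hasDerivAt_eq_zero ht01
      (fun x _ => (hhd x).continuousAt.continuousWithinAt) heq1 (fun x _ => hhd x)
    obtain ⟨b, hbI, hb0⟩ := exists_hasDerivAt_eq_zero ht12
      (fun x _ => (hhd x).continuousAt.continuousWithinAt) heq2 (fun x _ => hhd x)
    have hab : a < b := lt_trans haI.2 hbI.1
    obtain ⟨σ, hσI, hσ0⟩ := exists_hasDerivAt_eq_zero hab
      (fun x _ => (hhd2 x).continuousAt.continuousWithinAt) (ha0.trans hb0.symm)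
      (fun x _ => hhd2 x)
    have haM : a ∈ Set.Icc t₀ t₂ := ⟨haI.1.le, by linarith [haI.2]⟩
    have hσM : σ ∈ Set.Icc t₀ t₂ := ⟨by linarith [hσI.1, haI.1], by linarith [hσI.2, hbI.2]⟩
    have ha0' : (inner ℝ (D1 a) n : ℝ) = 0 := by rw [real_inner_comm]; exact ha0
    have hσ0' : (inner ℝ (D2 σ) n : ℝ) = 0 := by rw [real_inner_comm]; exact hσ0
    have e1 : (inner ℝ (D1 t₀) n : ℝ) = inner ℝ (D1 t₀ - D1 a) n := by
      rw [inner_sub_left, ha0', sub_zero]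
    have e2 : (inner ℝ (D2 t₀) n : ℝ) = inner ℝ (D2 t₀ - D2 σ) n := by
      rw [inner_sub_left, hσ0', sub_zero]
    have e1b : |(inner ℝ (D1 t₀) n : ℝ)| ≤ M₂ * (2 * ε) * ‖n‖ := by
      rw [e1]
      refine le_trans (abs_real_inner_le_norm _ _) ?_
      exact mul_le_mul_of_nonneg_right (hlip1 t₀ ht₀2 a haM) (norm_nonneg n)
    have e2b : |(inner ℝ (D2 t₀) n : ℝ)| ≤ M₃ * (2 * ε) * ‖n‖ := by
      rw [e2]
      refine le_trans (abs_real_inner_le_norm _ _) ?_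
      exact mul_le_mul_of_nonneg_right (hlip2 t₀ ht₀2 σ hσM) (norm_nonneg n)
    have hcn := hnd n
    have hmul := mul_lt_mul_of_pos_right hε2 hnpos
    linarith only [hcn, e1b, e2b, hmul]
  refine ⟨hind, ?_⟩
  set S : Affine.Simplex ℝ E2 2 := ⟨![γ t₀, γ t₁, γ t₂], hind⟩ with hSdef
  set O := S.circumcenter with hOdef
  set R := S.circumradius with hRdef
  have hw0 : ‖γ t₀ - O‖ = R := by
    rw [← dist_eq_norm]; exact S.dist_circumcenter_eq_circumradius 0
  have hw1 : ‖γ t₁ - O‖ = R := by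
    rw [← dist_eq_norm]; exact S.dist_circumcenter_eq_circumradius 1
  have hw2 : ‖γ t₂ - O‖ = R := by
    rw [← dist_eq_norm]; exact S.dist_circumcenter_eq_circumradius 2
  set g : ℝ → ℝ := fun t => (inner ℝ (D1 t) (γ t - O) : ℝ) with hgdef
  set g1 : ℝ → ℝ := fun t => (inner ℝ (D1 t) (D1 t) : ℝ) + (inner ℝ (D2 t) (γ t - O) : ℝ)
    with hg1def
  set g2 : ℝ → ℝ := fun t => ((inner ℝ (D1 t) (D2 t) : ℝ) + (inner ℝ (D2 t) (D1 t) : ℝ)) +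
      ((inner ℝ (D2 t) (D1 t) : ℝ) + (inner ℝ (D3 t) (γ t - O) : ℝ)) with hg2def
  have hgd : ∀ t, HasDerivAt g (g1 t) t := fun t => by
    exact (hd2 t).inner ℝ ((hd1 t).sub_const O)
  have hg1d : ∀ t, HasDerivAt g1 (g2 t) t := fun t => by
    exact ((hd2 t).inner ℝ (hd2 t)).add ((hd3 t).inner ℝ ((hd1 t).sub_const O))
  set f : ℝ → ℝ := fun t => (inner ℝ (γ t - O) (γ t - O) : ℝ) with hfdef
  have hfd : ∀ t, HasDerivAt f (2 * g t) t := fun t => by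
    have h := ((hd1 t).sub_const O).inner ℝ ((hd1 t).sub_const O)
    refine HasDerivAt.congr_deriv h (Eq.symm ?_)
    simp only [hgdef]
    rw [real_inner_comm (γ t - O) (D1 t), two_mul]
  have hfR : ∀ tt : ℝ, ‖γ tt - O‖ = R → f tt = R ^ 2 := fun tt htt => by
    simp only [hfdef]
    rw [real_inner_self_eq_norm_sq, htt]
  obtain ⟨s₁, hs₁I, hs₁⟩ := exists_hasDerivAt_eq_zero ht01
    (fun x _ => (hfd x).continuousAt.continuousWithinAt)
    ((hfR t₀ hw0).trans (hfR t₁ hw1).symm) (fun x _ => hfd x)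
  obtain ⟨s₂, hs₂I, hs₂⟩ := exists_hasDerivAt_eq_zero ht12
    (fun x _ => (hfd x).continuousAt.continuousWithinAt)
    ((hfR t₁ hw1).trans (hfR t₂ hw2).symm) (fun x _ => hfd x)
  have hgs₁ : g s₁ = 0 := by linarith
  have hgs₂ : g s₂ = 0 := by linarith
  have hs₁s₂ : s₁ < s₂ := lt_trans hs₁I.2 hs₂I.1
  obtain ⟨σ, hσI, hσ⟩ := exists_hasDerivAt_eq_zero hs₁s₂
    (fun x _ => (hgd x).continuousAt.continuousWithinAt) (hgs₁.trans hgs₂.symm)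
    (fun x _ => hgd x)
  have hs₁M : s₁ ∈ Set.Icc t₀ t₂ := ⟨hs₁I.1.le, by linarith [hs₁I.2]⟩
  have hs₂M : s₂ ∈ Set.Icc t₀ t₂ := ⟨by linarith [hs₂I.1], hs₂I.2.le⟩
  have hσM : σ ∈ Set.Icc t₀ t₂ := ⟨by linarith [hσI.1, hs₁I.1], by linarith [hσI.2, hs₂I.2]⟩
  -- lower bound on R
  have hD1σ : nv / 2 ≤ ‖D1 σ‖ := by
    have h1 := hlip1 t₀ ht₀2 σ hσM
    have h2 := norm_sub_norm_le (D1 t₀) (D1 σ)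
    have h3 : ‖D1 t₀‖ = nv := rfl
    linarith only [h1, h2, h3, hε3]
  have hγσO : nv ^ 2 / (4 * M₂) ≤ ‖γ σ - O‖ := by
    have e : (inner ℝ (D1 σ) (D1 σ) : ℝ) = ‖D1 σ‖ ^ 2 := real_inner_self_eq_norm_sq _
    have h1 : ‖D1 σ‖ ^ 2 ≤ M₂ * ‖γ σ - O‖ := by
      have h2 : ‖D1 σ‖ ^ 2 = -(inner ℝ (D2 σ) (γ σ - O) : ℝ) := by
        have := hσ
        simp only [hg1def] at this
        linarith [e ▸ this]
      have h3 := abs_real_inner_le_norm (D2 σ) (γ σ - O)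
      have h4 := mul_le_mul_of_nonneg_right (hM₂ σ (hsub hσM)) (norm_nonneg (γ σ - O))
      have h5 := neg_abs_le ((inner ℝ (D2 σ) (γ σ - O) : ℝ))
      linarith only [h2, h3, h4, h5]
    have hsq : (nv / 2) ^ 2 ≤ ‖D1 σ‖ ^ 2 := pow_le_pow_left₀ (by positivity) hD1σ 2
    rw [div_le_iff₀ (by positivity)]
    linarith only [hsq, h1]
  have hRlow : Rmin ≤ R := by
    have h1 := hlip0 σ hσM t₀ ht₀2
    have h2 := norm_sub_norm_le (γ σ - O) (γ t₀ - O)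
    rw [sub_sub_sub_cancel_right] at h2
    have h3 : nv ^ 2 / (4 * M₂) = 2 * (nv ^ 2 / (8 * M₂)) := by ring
    rw [hw0] at h2
    simp only [hRmindef]
    linarith only [h1, h2, h3, hε4, hγσO]
  have hRpos : (0:ℝ) < R := lt_of_lt_of_le hRminpos hRlow
  set B := 3 * M₁ * M₂ + M₃ * (R + M₁) with hBdef
  have hBpos : (0:ℝ) < B := by positivity
  have hγO : ∀ x ∈ Set.Icc t₀ t₂, ‖γ x - O‖ ≤ R + M₁ := by
    intro x hx
    have h1 := hlip0 x hx t₀ ht₀2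
    have h2 : ‖γ x - O‖ ≤ ‖γ x - γ t₀‖ + ‖γ t₀ - O‖ := by
      have := norm_add_le (γ x - γ t₀) (γ t₀ - O)
      rwa [sub_add_sub_cancel] at this
    have h3 : M₁ * (2 * ε) ≤ M₁ := by
      calc M₁ * (2 * ε) ≤ M₁ * 1 := mul_le_mul_of_nonneg_left hε1 hM₁pos.le
        _ = M₁ := mul_one _
    rw [hw0] at h2
    linarith only [h1, h2, h3]
  have hg2b : ∀ x ∈ Set.Icc t₀ t₂, |g2 x| ≤ B := by
    intro x hx
    have b1 : |(inner ℝ (D1 x) (D2 x) : ℝ)| ≤ M₁ * M₂ :=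
      le_trans (abs_real_inner_le_norm _ _)
        (mul_le_mul (hM₁ x (hsub hx)) (hM₂ x (hsub hx)) (norm_nonneg _) hM₁pos.le)
    have b2 : |(inner ℝ (D2 x) (D1 x) : ℝ)| ≤ M₁ * M₂ := by
      rw [real_inner_comm]; exact b1
    have b4 : |(inner ℝ (D3 x) (γ x - O) : ℝ)| ≤ M₃ * (R + M₁) :=
      le_trans (abs_real_inner_le_norm _ _)
        (mul_le_mul (hM₃ x (hsub hx)) (hγO x hx) (norm_nonneg _) hM₃pos.le)
    simp only [hg2def, hBdef]
    calc |(inner ℝ (D1 x) (D2 x) : ℝ) + (inner ℝ (D2 x) (D1 x) : ℝ) +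
          ((inner ℝ (D2 x) (D1 x) : ℝ) + (inner ℝ (D3 x) (γ x - O) : ℝ))|
        ≤ |(inner ℝ (D1 x) (D2 x) : ℝ)| + |(inner ℝ (D2 x) (D1 x) : ℝ)| +
          (|(inner ℝ (D2 x) (D1 x) : ℝ)| + |(inner ℝ (D3 x) (γ x - O) : ℝ)|) := by
          refine le_trans (abs_add_le _ _) ?_
          gcongr <;> exact abs_add_le _ _
      _ ≤ 3 * M₁ * M₂ + M₃ * (R + M₁) := by linarith only [b1, b2, b4]
  have hg1b : ∀ x ∈ Set.Icc t₀ t₂, |g1 x| ≤ B * (2 * ε) := by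
    intro x hx
    calc |g1 x| = |g1 x - g1 σ| := by rw [hσ, sub_zero]
      _ ≤ B * |x - σ| := by
          simpa [Real.norm_eq_abs] using lip_of_deriv hg1d hg2b hσM hx
      _ ≤ B * (2 * ε) := mul_le_mul_of_nonneg_left (habs x hx σ hσM) hBpos.le
  have hg0 : |g t₀| ≤ 4 * B * ε ^ 2 := by
    calc |g t₀| = |g t₀ - g s₁| := by rw [hgs₁, sub_zero]
      _ ≤ (B * (2 * ε)) * |t₀ - s₁| := by
          simpa [Real.norm_eq_abs] using lip_of_deriv hgd hg1b hs₁M ht₀2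
      _ ≤ (B * (2 * ε)) * (2 * ε) :=
          mul_le_mul_of_nonneg_left (habs t₀ ht₀2 s₁ hs₁M) (by positivity)
      _ = 4 * B * ε ^ 2 := by ring
  -- final computation
  have hCnv : C₀ * nv = 4 * (M₃ + X / Rmin) := by
    rw [hC₀def]
    field_simp
  have hXR : X ≤ X / Rmin * R := by
    rw [div_mul_eq_mul_div, le_div_iff₀ hRminpos]
    exact mul_le_mul_of_nonneg_left hRlow hXpos.le
  have key : 4 * B ≤ C₀ * nv * R := by
    have h1 : C₀ * nv * R = 4 * M₃ * R + 4 * (X / Rmin * R) := by rw [hCnv]; ring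
    rw [h1]
    linarith only [hXR, hBdef, hXdef]
  have hgoal : |g t₀| ≤ C₀ * ε ^ 2 * (nv * R) := by
    have h6 := mul_le_mul_of_nonneg_right key (sq_nonneg ε)
    linarith only [hg0, h6]
  rw [real_inner_smul_left, real_inner_smul_right, hw0]
  rw [abs_mul, abs_mul, abs_inv, abs_inv, abs_norm, abs_of_nonneg hRpos.le]
  have hfin : nv⁻¹ * (R⁻¹ * |g t₀|) ≤ nv⁻¹ * (R⁻¹ * (C₀ * ε ^ 2 * (nv * R))) := by
    gcongr
  calc nv⁻¹ * (R⁻¹ * |(inner ℝ (D1 t₀) (γ t₀ - O) : ℝ)|) = nv⁻¹ * (R⁻¹ * |g t₀|) := rfl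
    _ ≤ nv⁻¹ * (R⁻¹ * (C₀ * ε ^ 2 * (nv * R))) := hfin
    _ = C₀ * ε ^ 2 := by field_simp

end
end
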